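/- arXiv:0805.0342 — 4 statements merged into one kernel-verified Lean document; each statement's English description precedes it below -/
import Mathlib

section
/- With Γ, κ₁, κ₂, c as above, the identity ∑_{y,ỹ} Γ_{x,x̃,y,ỹ} = ∑_{y,ỹ} Γ_{y,ỹ,x,x̃} holds for all x, x̃ ∈ Z^d if and only if c(x) = 0 for all x ≠ 0. Moreover, if c(x) = 0 for all x ≠ 0, then V(x) := ∑_{y,ỹ} Γ_{x,0,y,ỹ} = 2κ₁ + κ₂·δ_{x,0}. -/
open MeasureTheory


lemma sum_reindex {G β : Type*} [AddCommGroup G] [DecidableEq G] [AddCommMonoid β]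
    (f : G → β) (T Q : Finset G) (e : G → G) (he : Function.Injective e)
    (h0 : ∀ z ∉ T, f z = 0) (hsub : T ⊆ Q.image e) :
    ∑ y ∈ Q, f (e y) = ∑ z ∈ T, f z := by
  rw [← Finset.sum_image (g := e) (f := f) (fun a _ b _ h => he h)]
  exact (Finset.sum_subset hsub (fun z _ hz => h0 z hz)).symm


/-- With `Γ`, `κ₁`, `κ₂ = c 0`, `c` as in the two-point construction, the full
symmetry `∑_{y,y'} Γ_{x,x',y,y'} = ∑_{y,y'} Γ_{y,y',x,x'}` holds for all `x, x'`
iff `c` vanishes off `0`; and in that case `V x = ∑_{y,y'} Γ_{x,0,y,y'} = 2κ₁ + κ₂ δ_{x,0}`. -/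
theorem stmt2 {d : ℕ} {Ω : Type*} [MeasurableSpace Ω] (μ : Measure Ω)
    [IsProbabilityMeasure μ]
    (K : (Fin d → ℤ) → Ω → ℝ) (hKmeas : ∀ x, Measurable (K x))
    (b : ℝ) (r : ℤ)
    (hbd : ∀ x ω, 0 ≤ K x ω ∧ K x ω ≤ if (∑ i, |x i|) ≤ r then b else 0)
    (δ : (Fin d → ℤ) → (Fin d → ℤ) → ℝ)
    (hδ : ∀ x y, δ x y = if x = y then 1 else 0)
    (Γ : (Fin d → ℤ) → (Fin d → ℤ) → (Fin d → ℤ) → (Fin d → ℤ) → ℝ)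
    (hΓ : ∀ x x' y y', Γ x x' y y' =
      (∫ ω, ((K (x - y) ω - δ x y) * δ x' y' + (K (x' - y') ω - δ x' y') * δ x y) ∂μ)
      + (∫ ω, (K (x - y) ω - δ x y) * (K (x' - y) ω - δ x' y) ∂μ) * δ y y')
    (c : (Fin d → ℤ) → ℝ)
    (hc : ∀ z, c z = ∑' y, ∫ ω, (K y ω - δ y 0) * (K (z + y) ω - δ (z + y) 0) ∂μ)
    (κ₁ : ℝ) (hκ₁ : κ₁ = ∑' x, ∫ ω, (K x ω - δ x 0) ∂μ)
    (κ₂ : ℝ) (hκ₂ : κ₂ = c 0) :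
    ((∀ x x', ∑' p : ((Fin d → ℤ) × (Fin d → ℤ)), Γ x x' p.1 p.2 =
        ∑' p : ((Fin d → ℤ) × (Fin d → ℤ)), Γ p.1 p.2 x x') ↔
      (∀ x, x ≠ 0 → c x = 0)) ∧
    ((∀ x, x ≠ 0 → c x = 0) →
      ∀ x, ∑' p : ((Fin d → ℤ) × (Fin d → ℤ)), Γ x 0 p.1 p.2 = 2 * κ₁ + κ₂ * δ x 0) := by
  classical
  set m : (Fin d → ℤ) → ℝ := fun z => ∫ ω, (K z ω - δ z 0) ∂μ with hm
  set q : (Fin d → ℤ) → (Fin d → ℤ) → ℝ :=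
    fun u v => ∫ ω, (K u ω - δ u 0) * (K v ω - δ v 0) ∂μ with hq
  -- finite range
  have hKz : ∀ z : Fin d → ℤ, ¬((∑ i, |z i|) ≤ r) → ∀ ω, K z ω = 0 := by
    intro z hz ω
    have h := hbd z ω
    rw [if_neg hz] at h
    linarith [h.1, h.2]
  set T : Finset (Fin d → ℤ) :=
    (Finset.Icc (fun _ => -r : Fin d → ℤ) (fun _ => r)) ∪ {0} with hT
  have h0T : (0 : Fin d → ℤ) ∈ T := by simp [hT]
  have hTmem : ∀ z : Fin d → ℤ, z ∉ T → (z ≠ 0 ∧ ∀ ω, K z ω = 0) := by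
    intro z hz
    have hz0 : z ≠ 0 := by rintro rfl; exact hz h0T
    refine ⟨hz0, hKz z ?_⟩
    intro hsum
    apply hz
    refine Finset.mem_union_left _ (Finset.mem_Icc.mpr ⟨fun i => ?_, fun i => ?_⟩)
    · have := le_trans (Finset.single_le_sum (fun j _ => abs_nonneg (z j)) (Finset.mem_univ i)) hsum
      exact (abs_le.mp this).1
    · exact le_trans (le_abs_self _) (le_trans (Finset.single_le_sum (fun j _ => abs_nonneg (z j)) (Finset.mem_univ i)) hsum)
  have hm0 : ∀ z ∉ T, m z = 0 := by
    intro z hz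
    obtain ⟨hz0, hK0⟩ := hTmem z hz
    have : ∀ ω, K z ω - δ z 0 = 0 := by
      intro ω; rw [hK0 ω, hδ, if_neg hz0]; ring
    simp only [hm, this, integral_zero]
  have hq0 : ∀ u v, (u ∉ T ∨ v ∉ T) → q u v = 0 := by
    intro u v huv
    have : ∀ ω, (K u ω - δ u 0) * (K v ω - δ v 0) = 0 := by
      intro ω
      rcases huv with h | h
      · obtain ⟨h0, hK0⟩ := hTmem u h
        rw [hK0 ω, hδ u 0, if_neg h0]; ring
      · obtain ⟨h0, hK0⟩ := hTmem v h
        rw [hK0 ω, hδ v 0, if_neg h0]; ring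
    simp only [hq, this, integral_zero]
  -- integrability
  have hKabs : ∀ z ω, |K z ω| ≤ |b| := by
    intro z ω
    have h := hbd z ω
    rw [abs_of_nonneg h.1]
    by_cases hr : (∑ i, |z i|) ≤ r
    · rw [if_pos hr] at h; exact h.2.trans (le_abs_self b)
    · rw [if_neg hr] at h; linarith [abs_nonneg b]
  have hIK : ∀ z, Integrable (K z) μ := by
    intro z
    refine Integrable.mono' (integrable_const |b|) (hKmeas z).aestronglyMeasurable
      (ae_of_all _ fun ω => ?_)
    rw [Real.norm_eq_abs]; exact hKabs z ω
  have hI1 : ∀ z, Integrable (fun ω => K z ω - δ z 0) μ := fun z =>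
    (hIK z).sub (integrable_const _)
  have hbnd1 : ∀ z ω, |K z ω - δ z 0| ≤ |b| + 1 := by
    intro z ω
    have h2 : |δ z 0| ≤ 1 := by rw [hδ]; split <;> norm_num
    calc |K z ω - δ z 0| ≤ |K z ω| + |δ z 0| := abs_sub _ _
      _ ≤ |b| + 1 := add_le_add (hKabs z ω) h2
  have hI2 : ∀ u v, Integrable (fun ω => (K u ω - δ u 0) * (K v ω - δ v 0)) μ := by
    intro u v
    refine Integrable.mono' (integrable_const ((|b| + 1) * (|b| + 1)))
      (((hKmeas u).sub measurable_const).mul ((hKmeas v).sub measurable_const)).aestronglyMeasurable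
      (ae_of_all _ fun ω => ?_)
    rw [Real.norm_eq_abs, abs_mul]
    exact mul_le_mul (hbnd1 u ω) (hbnd1 v ω) (abs_nonneg _) (by positivity)
  have hδsub : ∀ x y : Fin d → ℤ, δ x y = δ (x - y) 0 := by
    intro x y; rw [hδ, hδ]
    simp [sub_eq_zero]
  have hΓ' : ∀ x x' y y', Γ x x' y y' =
      m (x - y) * δ x' y' + m (x' - y') * δ x y + q (x - y) (x' - y) * δ y y' := by
    intro x x' y y'
    rw [hΓ]
    have e1 : (∫ ω, ((K (x - y) ω - δ x y) * δ x' y' + (K (x' - y') ω - δ x' y') * δ x y) ∂μ)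
        = m (x - y) * δ x' y' + m (x' - y') * δ x y := by
      rw [hδsub x y, hδsub x' y']
      rw [integral_add ((hI1 _).mul_const _) ((hI1 _).mul_const _),
        integral_mul_const, integral_mul_const]
    have e2 : (∫ ω, (K (x - y) ω - δ x y) * (K (x' - y) ω - δ x' y) ∂μ)
        = q (x - y) (x' - y) := by
      rw [hδsub x y, hδsub x' y]
    rw [e1, e2]
  -- the two tsum computations
  have hcs : ∀ w, c w = ∑ z ∈ T, q z (w + z) := by
    intro w
    rw [hc]
    exact tsum_eq_sum (fun z hz => hq0 _ _ (Or.inl hz))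
  have hκs : κ₁ = ∑ z ∈ T, m z := by
    rw [hκ₁]
    exact tsum_eq_sum hm0
  have hA : ∀ x x', (∑' p : ((Fin d → ℤ) × (Fin d → ℤ)), Γ x x' p.1 p.2)
      = (∑ z ∈ T, m z) + (∑ z ∈ T, m z) + c (x' - x) := by
    intro x x'
    set Q : Finset (Fin d → ℤ) :=
      (T.image (fun z => x - z)) ∪ ((T.image (fun z => x' - z)) ∪ {x, x'}) with hQdef
    have hxQ : x ∈ Q := by simp [hQdef]
    have hx'Q : x' ∈ Q := by simp [hQdef]
    have hsub1 : ∀ z ∈ T, x - z ∈ Q := by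
      intro z hz
      exact Finset.mem_union_left _ (Finset.mem_image.mpr ⟨z, hz, rfl⟩)
    have hsub2 : ∀ z ∈ T, x' - z ∈ Q := by
      intro z hz
      exact Finset.mem_union_right _ (Finset.mem_union_left _ (Finset.mem_image.mpr ⟨z, hz, rfl⟩))
    have himg1 : T ⊆ Q.image (fun z => x - z) := by
      intro z hz
      exact Finset.mem_image.mpr ⟨x - z, hsub1 z hz, by abel⟩
    have himg2 : T ⊆ Q.image (fun z => x' - z) := by
      intro z hz
      exact Finset.mem_image.mpr ⟨x' - z, hsub2 z hz, by abel⟩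
    have hnot1 : ∀ y, y ∉ Q → (x - y) ∉ T := by
      intro y hy hTm
      have := hsub1 _ hTm
      rw [sub_sub_cancel] at this
      exact hy this
    have hnot2 : ∀ y, y ∉ Q → (x' - y) ∉ T := by
      intro y hy hTm
      have := hsub2 _ hTm
      rw [sub_sub_cancel] at this
      exact hy this
    have hzero : ∀ p : ((Fin d → ℤ) × (Fin d → ℤ)), p ∉ Q ×ˢ Q → Γ x x' p.1 p.2 = 0 := by
      intro p hp
      rw [Finset.mem_product, not_and_or] at hp
      rw [hΓ']
      rcases hp with hp | hp
      · have h1 : m (x - p.1) = 0 := hm0 _ (hnot1 _ hp)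
        have h2 : δ x p.1 = 0 := by rw [hδ, if_neg]; rintro rfl; exact hp hxQ
        have h3 : q (x - p.1) (x' - p.1) = 0 := hq0 _ _ (Or.inl (hnot1 _ hp))
        rw [h1, h2, h3]; ring
      · have h1 : δ x' p.2 = 0 := by rw [hδ, if_neg]; rintro rfl; exact hp hx'Q
        have h2 : m (x' - p.2) = 0 := hm0 _ (hnot2 _ hp)
        by_cases h : p.1 = p.2
        · have h3 : q (x - p.1) (x' - p.1) = 0 := hq0 _ _ (Or.inl (hnot1 _ (h ▸ hp)))
          rw [h1, h2, h3]; ring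
        · have h3 : δ p.1 p.2 = 0 := by rw [hδ, if_neg h]
          rw [h1, h2, h3]; ring
    rw [tsum_eq_sum hzero, Finset.sum_product]
    have step1 : ∀ y ∈ Q, (∑ y' ∈ Q, Γ x x' y y')
        = m (x - y) + (∑ z ∈ T, m z) * δ x y + q (x - y) (x' - y) := by
      intro y hy
      simp only [hΓ']
      rw [Finset.sum_add_distrib, Finset.sum_add_distrib]
      congr 1
      · congr 1
        · simp [hδ, mul_ite, mul_one, mul_zero, Finset.sum_ite_eq, hx'Q]
        · rw [← Finset.sum_mul]
          congr 1
          exact sum_reindex m T Q (fun z => x' - z) sub_right_injective hm0 himg2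
      · simp [hδ, mul_ite, mul_one, mul_zero, Finset.sum_ite_eq, hy]
    rw [Finset.sum_congr rfl step1, Finset.sum_add_distrib, Finset.sum_add_distrib]
    congr 1
    · congr 1
      · exact sum_reindex m T Q (fun z => x - z) sub_right_injective hm0 himg1
      · simp [hδ, mul_ite, mul_one, mul_zero, Finset.sum_ite_eq, hxQ]
    · rw [hcs]
      have hcong : ∀ y ∈ Q, q (x - y) (x' - y) = (fun z => q z ((x' - x) + z)) (x - y) := by
        intro y _
        simp only
        congr 1
        abel
      rw [Finset.sum_congr rfl hcong]
      exact sum_reindex (fun z => q z ((x' - x) + z)) T Q (fun z => x - z)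
        sub_right_injective (fun z hz => hq0 _ _ (Or.inl hz)) himg1
  -- D and total sum of c
  set D : Finset (Fin d → ℤ) := (T ×ˢ T).image (fun p => p.1 - p.2) with hD
  have h0D : (0 : Fin d → ℤ) ∈ D := by
    refine Finset.mem_image.mpr ⟨(0, 0), Finset.mem_product.mpr ⟨h0T, h0T⟩, ?_⟩
    simp
  have hSig : (∑ z ∈ D, c z) = ∑ u ∈ T, ∑ v ∈ T, q u v := by
    calc ∑ z ∈ D, c z = ∑ z ∈ D, ∑ u ∈ T, q u (z + u) :=
          Finset.sum_congr rfl (fun z _ => hcs z)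
      _ = ∑ u ∈ T, ∑ z ∈ D, q u (z + u) := Finset.sum_comm
      _ = ∑ u ∈ T, ∑ v ∈ T, q u v := by
          refine Finset.sum_congr rfl (fun u hu => ?_)
          refine sum_reindex (fun v => q u v) T D (fun z => z + u) (add_left_injective u)
            (fun v hv => hq0 _ _ (Or.inr hv)) ?_
          intro v hv
          refine Finset.mem_image.mpr ⟨v - u, ?_, by abel⟩
          exact Finset.mem_image.mpr ⟨(v, u), Finset.mem_product.mpr ⟨hv, hu⟩, rfl⟩
  have hB : ∀ x x', (∑' p : ((Fin d → ℤ) × (Fin d → ℤ)), Γ p.1 p.2 x x')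
      = (∑ z ∈ T, m z) + (∑ z ∈ T, m z) + (∑ z ∈ D, c z) * δ x x' := by
    intro x x'
    set R : Finset (Fin d → ℤ) :=
      (T.image (fun z => z + x)) ∪ ((T.image (fun z => z + x')) ∪ {x, x'}) with hRdef
    have hxR : x ∈ R := by simp [hRdef]
    have hx'R : x' ∈ R := by simp [hRdef]
    have hsub1 : ∀ z ∈ T, z + x ∈ R := by
      intro z hz
      exact Finset.mem_union_left _ (Finset.mem_image.mpr ⟨z, hz, rfl⟩)
    have hsub2 : ∀ z ∈ T, z + x' ∈ R := by
      intro z hz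
      exact Finset.mem_union_right _ (Finset.mem_union_left _ (Finset.mem_image.mpr ⟨z, hz, rfl⟩))
    have himg1 : T ⊆ R.image (fun y => y - x) := by
      intro z hz
      exact Finset.mem_image.mpr ⟨z + x, hsub1 z hz, by abel⟩
    have himg2 : T ⊆ R.image (fun y => y - x') := by
      intro z hz
      exact Finset.mem_image.mpr ⟨z + x', hsub2 z hz, by abel⟩
    have hnot1 : ∀ y, y ∉ R → (y - x) ∉ T := by
      intro y hy hTm
      have := hsub1 _ hTm
      rw [sub_add_cancel] at this
      exact hy this
    have hnot2 : ∀ y, y ∉ R → (y - x') ∉ T := by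
      intro y hy hTm
      have := hsub2 _ hTm
      rw [sub_add_cancel] at this
      exact hy this
    have hzero : ∀ p : ((Fin d → ℤ) × (Fin d → ℤ)), p ∉ R ×ˢ R → Γ p.1 p.2 x x' = 0 := by
      intro p hp
      rw [Finset.mem_product, not_and_or] at hp
      rw [hΓ']
      rcases hp with hp | hp
      · have h1 : m (p.1 - x) = 0 := hm0 _ (hnot1 _ hp)
        have h2 : δ p.1 x = 0 := by rw [hδ, if_neg]; rintro rfl; exact hp hxR
        have h3 : q (p.1 - x) (p.2 - x) = 0 := hq0 _ _ (Or.inl (hnot1 _ hp))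
        rw [h1, h2, h3]; ring
      · have h1 : δ p.2 x' = 0 := by rw [hδ, if_neg]; rintro rfl; exact hp hx'R
        have h2 : m (p.2 - x') = 0 := hm0 _ (hnot2 _ hp)
        have h3 : q (p.1 - x) (p.2 - x) = 0 := hq0 _ _ (Or.inr (hnot1 _ hp))
        rw [h1, h2, h3]; ring
    rw [tsum_eq_sum hzero, Finset.sum_product]
    have step1 : ∀ y ∈ R, (∑ y' ∈ R, Γ y y' x x')
        = m (y - x) + (∑ z ∈ T, m z) * δ y x + (∑ v ∈ T, q (y - x) v) * δ x x' := by
      intro y hy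
      simp only [hΓ']
      rw [Finset.sum_add_distrib, Finset.sum_add_distrib]
      congr 1
      · congr 1
        · simp [hδ, mul_ite, mul_one, mul_zero, Finset.sum_ite_eq', hx'R]
        · rw [← Finset.sum_mul]
          congr 1
          exact sum_reindex m T R (fun y' => y' - x') sub_left_injective hm0 himg2
      · rw [← Finset.sum_mul]
        congr 1
        exact sum_reindex (fun v => q (y - x) v) T R (fun y' => y' - x) sub_left_injective
          (fun v hv => hq0 _ _ (Or.inr hv)) himg1
    rw [Finset.sum_congr rfl step1, Finset.sum_add_distrib, Finset.sum_add_distrib]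
    congr 1
    · congr 1
      · exact sum_reindex m T R (fun y => y - x) sub_left_injective hm0 himg1
      · simp [hδ, mul_ite, mul_one, mul_zero, Finset.sum_ite_eq', hxR]
    · rw [hSig, ← Finset.sum_mul]
      congr 1
      exact sum_reindex (fun u => ∑ v ∈ T, q u v) T R (fun y => y - x) sub_left_injective
        (fun u hu => Finset.sum_eq_zero (fun v _ => hq0 _ _ (Or.inl hu))) himg1
  -- final assembly
  refine ⟨⟨fun H z hz => ?_, fun hv x x' => ?_⟩, fun hv x => ?_⟩
  · have h := H 0 z
    rw [hA, hB] at h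
    have hδ0 : δ (0 : Fin d → ℤ) z = 0 := by
      rw [hδ, if_neg (fun hh => hz hh.symm)]
    rw [hδ0, mul_zero, sub_zero] at h
    linarith
  · rw [hA, hB]
    have hDsum : (∑ z ∈ D, c z) = c 0 :=
      Finset.sum_eq_single_of_mem 0 h0D (fun z _ hz => hv z hz)
    rw [hDsum]
    by_cases hxx : x = x'
    · subst hxx
      rw [sub_self, hδ, if_pos rfl, mul_one]
    · rw [hv _ (sub_ne_zero.mpr (fun hh => hxx hh.symm)), hδ, if_neg hxx, mul_zero]
  · rw [hA x 0, zero_sub]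
    by_cases hx0 : x = 0
    · subst hx0
      rw [neg_zero, hδ, if_pos rfl, mul_one, ← hκ₂, hκs]
      ring
    · rw [hv _ (neg_ne_zero.mpr hx0), hδ, if_neg hx0, mul_zero, hκs]
      ring
end

section
/- Under the condition ∑_y E[(K_y−δ_{y,0})(K_{x+y}−δ_{x+y,0})] = 0 for all x ≠ 0, for any x ≠ y one has ∑_{z∈Z^d} Γ_{y+z, z, x, 0} = E[K_{x−y}] + E[K_{y−x}]. -/
open MeasureTheory

/-- Under condition (K4) (`c x = 0` for `x ≠ 0`), for `x ≠ y` the jump rate of the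
relative motion of the dual two-point chain is
`∑_z Γ_{y+z, z, x, 0} = E[K_{x−y}] + E[K_{y−x}]`. -/
theorem stmt3 {d : ℕ} {Ω : Type*} [MeasurableSpace Ω] (μ : Measure Ω)
    [IsProbabilityMeasure μ]
    (K : (Fin d → ℤ) → Ω → ℝ) (hKmeas : ∀ x, Measurable (K x))
    (b : ℝ) (r : ℤ)
    (hbd : ∀ x ω, 0 ≤ K x ω ∧ K x ω ≤ if (∑ i, |x i|) ≤ r then b else 0)
    (δ : (Fin d → ℤ) → (Fin d → ℤ) → ℝ)
    (hδ : ∀ x y, δ x y = if x = y then 1 else 0)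
    (Γ : (Fin d → ℤ) → (Fin d → ℤ) → (Fin d → ℤ) → (Fin d → ℤ) → ℝ)
    (hΓ : ∀ x x' y y', Γ x x' y y' =
      (∫ ω, ((K (x - y) ω - δ x y) * δ x' y' + (K (x' - y') ω - δ x' y') * δ x y) ∂μ)
      + (∫ ω, (K (x - y) ω - δ x y) * (K (x' - y) ω - δ x' y) ∂μ) * δ y y')
    (hK4 : ∀ x : Fin d → ℤ, x ≠ 0 →
      (∑' y, ∫ ω, (K y ω - δ y 0) * (K (x + y) ω - δ (x + y) 0) ∂μ) = 0) :
    ∀ x y : Fin d → ℤ, x ≠ y →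
      ∑' z : Fin d → ℤ, Γ (y + z) z x 0 =
        (∫ ω, K (x - y) ω ∂μ) + ∫ ω, K (y - x) ω ∂μ := by
  intro x y hxy
  have hyx : y ≠ x := fun h => hxy h.symm
  -- K vanishes outside the ℓ¹-ball of radius r
  have hKzero : ∀ z : Fin d → ℤ, ¬ ((∑ i, |z i|) ≤ r) → ∀ ω, K z ω = 0 := by
    intro z hz ω
    have h := hbd z ω
    rw [if_neg hz] at h
    linarith [h.1, h.2]
  set g1 : (Fin d → ℤ) → ℝ := fun z => if z = 0 then (∫ ω, K (y - x) ω ∂μ) else 0 with hg1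
  set g2 : (Fin d → ℤ) → ℝ := fun z => if z = x - y then (∫ ω, K (x - y) ω ∂μ) else 0 with hg2
  set g3 : (Fin d → ℤ) → ℝ := fun z =>
    (∫ ω, (K (y + z - x) ω - δ (y + z) x) * (K (z - x) ω - δ z x) ∂μ) * δ x 0 with hg3
  have hiff : ∀ z : Fin d → ℤ, (y + z = x) ↔ (z = x - y) := by
    intro z
    constructor
    · intro h; rw [← h]; abel
    · intro h; rw [h]; abel
  have key : ∀ z, Γ (y + z) z x 0 = g1 z + g2 z + g3 z := by
    intro z
    rw [hΓ]
    congr 1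
    by_cases hz0 : z = 0
    · subst hz0
      have e1 : δ (0 : Fin d → ℤ) 0 = 1 := by rw [hδ]; simp
      have e2 : δ y x = 0 := by rw [hδ]; simp [hyx]
      have e3 : (0 : Fin d → ℤ) ≠ x - y := fun h => hxy (sub_eq_zero.mp h.symm)
      simp only [add_zero] 
      simp only [hg1, hg2, e1, e2, if_pos rfl, if_neg e3, mul_one, mul_zero, add_zero, sub_zero]
    · by_cases hzx : z = x - y
      · have e1 : δ z (0 : Fin d → ℤ) = 0 := by rw [hδ]; simp [hz0]
        have e2 : δ (y + z) x = 1 := by rw [hδ]; simp [(hiff z).mpr hzx]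
        simp only [hg1, hg2, e1, e2, if_pos hzx, if_neg hz0, mul_one, mul_zero, zero_add,
          sub_zero]
        rw [hzx]
      · have e1 : δ z (0 : Fin d → ℤ) = 0 := by rw [hδ]; simp [hz0]
        have e2 : δ (y + z) x = 0 := by
          rw [hδ]; simp only [ite_eq_right_iff]
          intro h; exact absurd ((hiff z).mp h) hzx
        simp only [hg1, hg2, e1, e2, if_neg hzx, if_neg hz0, mul_zero, add_zero, zero_add]
        simp
  -- summability and values of the three pieces
  have s1 : Summable g1 := by
    apply summable_of_ne_finset_zero (s := {(0 : Fin d → ℤ)})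
    intro z hz
    simp only [Finset.mem_singleton] at hz
    simp [hg1, hz]
  have s2 : Summable g2 := by
    apply summable_of_ne_finset_zero (s := {(x - y : Fin d → ℤ)})
    intro z hz
    simp only [Finset.mem_singleton] at hz
    simp [hg2, hz]
  have t1 : ∑' z, g1 z = ∫ ω, K (y - x) ω ∂μ := tsum_ite_eq 0 _
  have t2 : ∑' z, g2 z = ∫ ω, K (x - y) ω ∂μ := tsum_ite_eq _ _
  have hs3t3 : Summable g3 ∧ (∑' z, g3 z = 0) := by
    by_cases hx0 : x = 0
    · subst hx0
      have hy0 : y ≠ 0 := fun h => hxy h.symm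
      have hge : g3 = fun z => ∫ ω, (K z ω - δ z 0) * (K (y + z) ω - δ (y + z) 0) ∂μ := by
        funext z
        have e1 : δ (0 : Fin d → ℤ) 0 = 1 := by rw [hδ]; simp
        simp only [hg3, e1, mul_one, sub_zero]
        congr 1
        funext ω
        ring
      constructor
      · rw [hge]
        apply summable_of_ne_finset_zero
          (s := (Finset.Icc (fun _ => -r) (fun _ => r) : Finset (Fin d → ℤ)) ∪ {0})
        intro z hz
        simp only [Finset.mem_union, Finset.mem_singleton, not_or] at hz
        obtain ⟨hzIcc, hz0⟩ := hz
        rw [Finset.mem_Icc] at hzIcc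
        have hsum : ¬ ((∑ i, |z i|) ≤ r) := by
          rcases not_and_or.mp hzIcc with h | h
          · rw [Pi.le_def] at h
            push_neg at h
            obtain ⟨i, hi⟩ := h
            have h1 : r < |z i| := by
              have h2 : z i < -r := hi
              have h3 := neg_le_abs (z i)
              linarith
            have h2 : |z i| ≤ ∑ j, |z j| :=
              Finset.single_le_sum (f := fun j => |z j|) (fun j _ => abs_nonneg _)
                (Finset.mem_univ i)
            linarith
          · rw [Pi.le_def] at h
            push_neg at h
            obtain ⟨i, hi⟩ := h
            have h1 : r < |z i| := lt_of_lt_of_le hi (le_abs_self _)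
            have h2 : |z i| ≤ ∑ j, |z j| :=
              Finset.single_le_sum (f := fun j => |z j|) (fun j _ => abs_nonneg _)
                (Finset.mem_univ i)
            linarith
        have hKz : ∀ ω, K z ω = 0 := hKzero z hsum
        have hδz : δ z 0 = 0 := by rw [hδ]; simp [hz0]
        have : ∀ ω, (K z ω - δ z 0) * (K (y + z) ω - δ (y + z) 0) = 0 := by
          intro ω; rw [hKz ω, hδz]; ring
        simp only [this, integral_zero]
      · rw [hge]
        exact hK4 y hy0
    · have hz3 : ∀ z, g3 z = 0 := by
        intro z
        have : δ x 0 = 0 := by rw [hδ]; simp [hx0]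
        simp [hg3, this]
      constructor
      · exact summable_of_ne_finset_zero (s := ∅) (fun z _ => hz3 z)
      · rw [tsum_congr hz3]; exact tsum_zero
  obtain ⟨s3, t3⟩ := hs3t3
  rw [tsum_congr key, Summable.tsum_add (s1.add s2) s3, Summable.tsum_add s1 s2, t1, t2, t3]
  ring
end

section
/- For the BCPP generator kernel, condition (a) of the CLT theorem, κ₂·G(0)/2 < 1, is equivalent to d ≥ 3 and λ > 1/(2d(1 − 2π_d)), where π_d is the return probability of the simple random walk on Z^d. -/
/-- For the BCPP kernel (with `κ₂ = 1`, `c = λ/(2dλ+1)` and Green function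
`G(0) = 1/(2dc(1−π_d))` in the transient case `d ≥ 3`, `G(0) = ∞` otherwise),
condition (a) `κ₂·G(0)/2 < 1` is equivalent to `d ≥ 3` and `λ > 1/(2d(1−2π_d))`. -/
theorem stmt11 (d : ℕ) (l π : ℝ) (hl : 0 < l) (hπ0 : 0 ≤ π) (hπ : π < 1 / 2)
    (c : ℝ) (hc : c = l / (2 * (d:ℝ) * l + 1))
    (G0 : ENNReal)
    (hG0 : G0 = if 3 ≤ d then ENNReal.ofReal (1 / (2 * (d:ℝ) * c * (1 - π))) else ⊤) :
    G0 / 2 < 1 ↔ (3 ≤ d ∧ 1 / (2 * (d:ℝ) * (1 - 2 * π)) < l) := by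
  subst hG0 hc
  by_cases hd : 3 ≤ d
  · simp only [hd, if_true, true_and]
    have hd3 : (3:ℝ) ≤ (d:ℝ) := by exact_mod_cast hd
    have h1 : 0 < 2 * (d:ℝ) * l + 1 := by nlinarith
    have hq : l / (2 * (d:ℝ) * l + 1) * (2 * (d:ℝ) * l + 1) = l :=
      div_mul_cancel₀ l (ne_of_gt h1)
    have hq0 : 0 < l / (2 * (d:ℝ) * l + 1) := div_pos hl h1
    have hπ1 : 0 < 1 - π := by linarith
    have h2 : 0 < 2 * (d:ℝ) * (l / (2 * (d:ℝ) * l + 1)) * (1 - π) := by positivity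
    have hpos2 : 0 < 2 * (d:ℝ) * (1 - 2 * π) := by nlinarith
    have key : 1 / (2 * (d:ℝ) * (l / (2 * (d:ℝ) * l + 1)) * (1 - π)) < 2 ↔
        1 / (2 * (d:ℝ) * (1 - 2 * π)) < l := by
      rw [div_lt_iff₀ h2, div_lt_iff₀ hpos2]
      constructor <;> intro h
      · nlinarith [mul_pos h1 (sub_pos.mpr h)]
      · nlinarith [mul_pos hq0 (sub_pos.mpr h), mul_pos hq0 hπ1]
    rw [ENNReal.div_lt_iff (Or.inl (by norm_num)) (Or.inl (by norm_num)), one_mul]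
    rw [show (2:ENNReal) = ENNReal.ofReal 2 by norm_num,
      ENNReal.ofReal_lt_ofReal_iff (by norm_num)]
    exact key
  · simp only [hd, if_false, false_and, iff_false]
    rw [ENNReal.top_div_of_ne_top (by norm_num)]
    simp
end

section
/- Under the hypotheses of the CLT theorem with κ₂G(0)/2 < 1, the replica overlap R_t = ∑_x ρ_{t,x}², where ρ_{t,x} = η_{t,x}/|η_t| on {|η_t|>0}, satisfies R_t = O(t^{−d/2}) in P(·| |η̄_∞| > 0)-probability; i.e., for every ε > 0 there is M such that limsup_t P(t^{d/2}R_t > M | |η̄_∞| > 0) < ε. -/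
/-!
Write `S_t = ∑_x η_{t,x}` and `Q_t = ∑_x η_{t,x}²`, so that `R_t = Q_t / S_t²` (also when
`S_t = 0`, both sides being `0`). Under the conditional law `P(· | M_∞ > 0)`, the family
`t^{d/2} Q_t` is bounded in probability by Markov's inequality and the second-moment bound,
while `S_t⁻²` converges almost surely to `M_∞⁻²` and is therefore bounded in probability too.
A product of two families bounded in probability is bounded in probability.
-/

open Filter Topology ENNReal ProbabilityTheory

namespace MeasureTheory

variable {Ω ι : Type*} [MeasurableSpace Ω]

def BoundedInProbability (μ : Measure Ω) (l : Filter ι) (X : ι → Ω → ℝ) : Prop :=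
  ∀ η : ℝ≥0∞, 0 < η → ∃ M : ℝ, ∀ᶠ i in l, μ {ω | M < |X i ω|} ≤ η

namespace BoundedInProbability

variable {μ : Measure Ω} {l : Filter ι} {X Y : ι → Ω → ℝ}

theorem mul (hX : BoundedInProbability μ l X) (hY : BoundedInProbability μ l Y) :
    BoundedInProbability μ l fun i ω => X i ω * Y i ω := by
  intro η hη
  obtain ⟨M₁, hM₁⟩ := hX (η / 2) (ENNReal.half_pos hη.ne')
  obtain ⟨M₂, hM₂⟩ := hY (η / 2) (ENNReal.half_pos hη.ne')
  refine ⟨M₁ * M₂, ?_⟩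
  filter_upwards [hM₁, hM₂] with i h₁ h₂
  have hsub : {ω | M₁ * M₂ < |X i ω * Y i ω|} ⊆ {ω | M₁ < |X i ω|} ∪ {ω | M₂ < |Y i ω|} := by
    intro ω hω
    by_contra h
    simp only [Set.mem_union, Set.mem_ofPred_eq, not_or, not_lt, abs_mul] at h hω
    exact hω.not_ge (mul_le_mul h.1 h.2 (abs_nonneg _) ((abs_nonneg _).trans h.1))
  calc μ {ω | M₁ * M₂ < |X i ω * Y i ω|} ≤ η / 2 + η / 2 :=
        (measure_mono hsub).trans ((measure_union_le _ _).trans (add_le_add h₁ h₂))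
    _ = η := ENNReal.add_halves η

theorem exists_limsup_lt (hX : BoundedInProbability μ l X) {ε : ℝ≥0∞} (hε : 0 < ε) :
    ∃ M : ℝ, limsup (fun i => μ {ω | M < X i ω}) l < ε := by
  obtain ⟨η, hη, hηε⟩ := exists_between hε
  obtain ⟨M, hM⟩ := hX η hη
  refine ⟨M, lt_of_le_of_lt (limsup_le_of_le (by isBoundedDefault) ?_) hηε⟩
  filter_upwards [hM] with i hi
  exact (measure_mono fun ω (hω : M < X i ω) => hω.trans_le (le_abs_self _)).trans hi

theorem of_lintegral_enorm_le {B : ℝ≥0∞} (hB : B ≠ ∞) (hX : ∀ᶠ i in l, AEMeasurable (X i) μ)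
    (hint : ∀ᶠ i in l, ∫⁻ ω, ‖X i ω‖ₑ ∂μ ≤ B) : BoundedInProbability μ l X := by
  intro η hη
  have hlim : Tendsto (fun n : ℕ => B / n) atTop (𝓝 0) := by
    simpa using ENNReal.Tendsto.const_div ENNReal.tendsto_nat_nhds_top (Or.inr hB)
  obtain ⟨n, hn, hn1⟩ := ((hlim.eventually (gt_mem_nhds hη)).and (eventually_ge_atTop 1)).exists
  refine ⟨n, ?_⟩
  filter_upwards [hX, hint] with i hXi hi
  have hsub : {ω | (n : ℝ) < |X i ω|} ⊆ {ω | (n : ℝ≥0∞) ≤ ‖X i ω‖ₑ} := fun ω hω => by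
    simpa only [Set.mem_ofPred_eq, Real.enorm_eq_ofReal_abs, ENNReal.ofReal_natCast] using
      ENNReal.ofReal_le_ofReal (le_of_lt hω)
  calc μ {ω | (n : ℝ) < |X i ω|} ≤ (∫⁻ ω, ‖X i ω‖ₑ ∂μ) / n :=
        (measure_mono hsub).trans (meas_ge_le_lintegral_div hXi.enorm (by positivity)
          (natCast_ne_top n))
    _ ≤ B / n := by gcongr
    _ ≤ η := hn.le

end BoundedInProbability

theorem boundedInProbability_of_tendsto_ae {μ : Measure Ω} [IsFiniteMeasure μ] {l : Filter ι}
    [l.IsCountablyGenerated] {X : ι → Ω → ℝ} {Y : Ω → ℝ} (hX : ∀ i, Measurable (X i))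
    (hY : Measurable Y) (hlim : ∀ᵐ ω ∂μ, Tendsto (fun i => X i ω) l (𝓝 (Y ω))) :
    BoundedInProbability μ l X := by
  intro η hη
  have hη2 : 0 < η / 2 := ENNReal.half_pos hη.ne'
  have hfar : Tendsto (fun i => μ {ω | |Y ω| + 1 < |X i ω|}) l (𝓝 0) := by
    simpa using tendsto_measure_of_ae_tendsto_indicator_of_isFiniteMeasure l
      MeasurableSet.empty (fun i => measurableSet_lt (hY.abs.add_const 1) (hX i).abs) (by
        filter_upwards [hlim] with ω hω
        filter_upwards [hω.abs.eventually (gt_mem_nhds (lt_add_one |Y ω|))] with i hi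
        simp [hi.le])
  have htail : Tendsto (fun M : ℝ => μ {ω | M ≤ |Y ω| + 1}) atTop (𝓝 0) := by
    simpa using tendsto_measure_of_ae_tendsto_indicator_of_isFiniteMeasure atTop
      MeasurableSet.empty (fun M => measurableSet_le measurable_const (hY.abs.add_const 1)) (by
        filter_upwards with ω
        filter_upwards [eventually_gt_atTop (|Y ω| + 1)] with M hM
        simp [hM])
  obtain ⟨M, hM⟩ := (htail.eventually (gt_mem_nhds hη2)).exists
  refine ⟨M, ?_⟩
  filter_upwards [hfar.eventually (gt_mem_nhds hη2)] with i hi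
  have hsub : {ω | M < |X i ω|} ⊆ {ω | M ≤ |Y ω| + 1} ∪ {ω | |Y ω| + 1 < |X i ω|} := by
    intro ω (hω : M < |X i ω|)
    by_cases h : |Y ω| + 1 < |X i ω|
    · exact Or.inr h
    · exact Or.inl (hω.le.trans (not_lt.1 h))
  calc μ {ω | M < |X i ω|} ≤ η / 2 + η / 2 :=
        (measure_mono hsub).trans ((measure_union_le _ _).trans (add_le_add hM.le hi.le))
    _ = η := ENNReal.add_halves η

theorem lintegral_cond_le (μ : Measure Ω) (s : Set Ω) (f : Ω → ℝ≥0∞) :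
    ∫⁻ ω, f ω ∂μ[|s] ≤ (μ s)⁻¹ * ∫⁻ ω, f ω ∂μ := by
  rw [ProbabilityTheory.cond, lintegral_smul_measure]
  exact mul_le_mul_right (lintegral_mono' Measure.restrict_le_self le_rfl) _

theorem lintegral_enorm_rpow_mul_le {μ : Measure Ω} {f : Ω → ℝ} (hf : ∀ ω, 0 ≤ f ω)
    {t p C : ℝ} (ht : 0 < t)
    (h : ∫⁻ ω, ENNReal.ofReal (f ω) ∂μ ≤ ENNReal.ofReal (C * t ^ (-p))) :
    ∫⁻ ω, ‖t ^ p * f ω‖ₑ ∂μ ≤ ENNReal.ofReal C := by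
  have htp : 0 < t ^ p := Real.rpow_pos_of_pos ht p
  calc ∫⁻ ω, ‖t ^ p * f ω‖ₑ ∂μ
        = ENNReal.ofReal (t ^ p) * ∫⁻ ω, ENNReal.ofReal (f ω) ∂μ := by
        simp_rw [enorm_mul, Real.enorm_of_nonneg htp.le, Real.enorm_of_nonneg (hf _)]
        exact lintegral_const_mul' _ _ ofReal_ne_top
    _ ≤ ENNReal.ofReal (t ^ p) * ENNReal.ofReal (C * t ^ (-p)) := by gcongr
    _ = ENNReal.ofReal C := by
        rw [← ENNReal.ofReal_mul htp.le, Real.rpow_neg ht.le, mul_left_comm,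
          mul_inv_cancel₀ htp.ne', mul_one]

end MeasureTheory

open MeasureTheory

theorem tsum_sq_normalized {ι : Type*} {a : ι → ℝ} (ha : ∀ x, 0 ≤ a x) :
    ∑' x, (if 0 < ∑' y, a y then a x / ∑' y, a y else 0) ^ 2 =
      (∑' x, a x ^ 2) / (∑' y, a y) ^ 2 := by
  have hdiv : ∀ x, (if 0 < ∑' y, a y then a x / ∑' y, a y else 0) = a x / ∑' y, a y := by
    intro x
    split_ifs with h
    · rfl
    · simp [le_antisymm (not_lt.1 h) (tsum_nonneg ha)]
  simp_rw [hdiv, div_pow]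
  exact tsum_div_const

theorem stmt15_general {d : ℕ} {Ω : Type*} [MeasurableSpace Ω] (P : Measure Ω)
    (η : ℝ → Ω → (Fin d → ℤ) → ℝ)
    (hnn : ∀ t ω x, 0 ≤ η t ω x)
    (hmeas : ∀ t x, Measurable fun ω => η t ω x)
    (Minf : Ω → ℝ) (hMmeas : Measurable Minf)
    (hconv : ∀ᵐ ω ∂P, Filter.Tendsto (fun t => ∑' x, η t ω x) Filter.atTop
      (nhds (Minf ω)))
    (hpos : 0 < P {ω | 0 < Minf ω})
    (C : ℝ) (hmom : ∀ t : ℝ, 0 < t →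
      (∫⁻ ω, ENNReal.ofReal (∑' x, (η t ω x) ^ 2) ∂P)
        ≤ ENNReal.ofReal (C * t ^ (-(d:ℝ) / 2)))
    (ρ : ℝ → Ω → (Fin d → ℤ) → ℝ)
    (hρ : ∀ t ω x, ρ t ω x =
      if 0 < ∑' y, η t ω y then η t ω x / ∑' y, η t ω y else 0)
    (R : ℝ → Ω → ℝ) (hR : ∀ t ω, R t ω = ∑' x, (ρ t ω x) ^ 2) :
    ∀ ε : ℝ, 0 < ε → ∃ M : ℝ,
      Filter.limsup
        (fun t : ℝ => ProbabilityTheory.cond P {ω | 0 < Minf ω}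
          {ω | M < t ^ ((d:ℝ) / 2) * R t ω})
        Filter.atTop < ENNReal.ofReal ε := by
  intro ε hε
  set s := {ω | 0 < Minf ω}
  have hR_eq : ∀ t ω, t ^ ((d:ℝ) / 2) * R t ω =
      t ^ ((d:ℝ) / 2) * (∑' x, η t ω x ^ 2) * ((∑' x, η t ω x) ^ 2)⁻¹ := fun t ω => by
    rw [hR, funext (hρ t ω), tsum_sq_normalized (hnn t ω)]
    ring
  have hmass : BoundedInProbability P[|s] atTop
      fun t ω => t ^ ((d:ℝ) / 2) * ∑' x, η t ω x ^ 2 := by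
    refine .of_lintegral_enorm_le (B := (P s)⁻¹ * ENNReal.ofReal C)
      (mul_ne_top (inv_ne_top.2 hpos.ne') ofReal_ne_top)
      (Eventually.of_forall fun t =>
        ((Measurable.tsum fun x => (hmeas t x).pow_const 2).const_mul _).aemeasurable) ?_
    filter_upwards [eventually_gt_atTop 0] with t ht
    refine (lintegral_cond_le P s _).trans (mul_le_mul_right ?_ _)
    exact lintegral_enorm_rpow_mul_le (fun ω => tsum_nonneg fun x => sq_nonneg _) ht
      (by simpa only [neg_div] using hmom t ht)
  have hinv : BoundedInProbability P[|s] atTop fun t ω => ((∑' x, η t ω x) ^ 2)⁻¹ := by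
    refine boundedInProbability_of_tendsto_ae
      (fun t => ((Measurable.tsum (hmeas t)).pow_const 2).inv) ((hMmeas.pow_const 2).inv) ?_
    filter_upwards [cond_absolutelyContinuous.ae_le hconv,
      ae_cond_mem (measurableSet_lt measurable_const hMmeas)] with ω hω (hωs : 0 < Minf ω)
    exact (hω.pow 2).inv₀ (pow_ne_zero 2 hωs.ne')
  simpa only [hR_eq] using (hmass.mul hinv).exists_limsup_lt (ofReal_pos.2 hε)

/-- Delocalization of the replica overlap: if the total mass `∑_x η̄_{t,x}`
converges a.s. to `M_∞` and `E[∑_x η̄_{t,x}²] ≤ C t^{−d/2}`, then the replica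
overlap `R_t = ∑_x ρ_{t,x}²` satisfies `R_t = O(t^{−d/2})` in
`P(·| M_∞ > 0)`-probability: for every `ε > 0` there is `M` with
`limsup_t P(t^{d/2} R_t > M | M_∞ > 0) < ε`. -/
theorem stmt15 {d : ℕ} {Ω : Type*} [MeasurableSpace Ω] (P : Measure Ω)
    [IsProbabilityMeasure P]
    (η : ℝ → Ω → (Fin d → ℤ) → ℝ)
    (hnn : ∀ t ω x, 0 ≤ η t ω x)
    (hsum : ∀ t ω, Summable (η t ω))
    (hmeas : ∀ t x, Measurable fun ω => η t ω x)
    (Minf : Ω → ℝ) (hMmeas : Measurable Minf) (hMnn : ∀ ω, 0 ≤ Minf ω)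
    (hconv : ∀ᵐ ω ∂P, Filter.Tendsto (fun t => ∑' x, η t ω x) Filter.atTop
      (nhds (Minf ω)))
    (hpos : 0 < P {ω | 0 < Minf ω})
    (C : ℝ) (hmom : ∀ t : ℝ, 0 < t →
      (∫⁻ ω, ENNReal.ofReal (∑' x, (η t ω x) ^ 2) ∂P)
        ≤ ENNReal.ofReal (C * t ^ (-(d:ℝ) / 2)))
    (ρ : ℝ → Ω → (Fin d → ℤ) → ℝ)
    (hρ : ∀ t ω x, ρ t ω x =
      if 0 < ∑' y, η t ω y then η t ω x / ∑' y, η t ω y else 0)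
    (R : ℝ → Ω → ℝ) (hR : ∀ t ω, R t ω = ∑' x, (ρ t ω x) ^ 2) :
    ∀ ε : ℝ, 0 < ε → ∃ M : ℝ,
      Filter.limsup
        (fun t : ℝ => ProbabilityTheory.cond P {ω | 0 < Minf ω}
          {ω | M < t ^ ((d:ℝ) / 2) * R t ω})
        Filter.atTop < ENNReal.ofReal ε :=
  stmt15_general P η hnn hmeas Minf hMmeas hconv hpos C hmom ρ hρ R hR
end
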